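/- arXiv:2605.28072 — 6 statements merged into one kernel-verified Lean document; each statement's English description precedes it below -/
import Mathlib

section
/- A function ρ from subspaces of a finite-dimensional F_q-vector space E to ℕ satisfies the rank axioms (R1)-(R3) of a q-matroid if and only if it satisfies the local axioms: (R1') ρ({0}) = 0; (R2') ρ(V) ≤ ρ(V + x) ≤ ρ(V) + 1 for all subspaces V and 1-dimensional subspaces x; (R3') if ρ(V) = ρ(V + x) = ρ(V + y) for 1-dimensional x, y, then ρ(V + x + y) = ρ(V). -/
open Submodule Module

variable (K L : Type) [Field K] [Fintype K] [Field L] [Fintype L] [Algebra K L]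

/-- Orthogonal complement w.r.t. the standard dot product on `ι → K`. -/
def stdPerp {ι : Type} [Fintype ι] (V : Submodule K (ι → K)) : Submodule K (ι → K) where
  carrier := {w | ∀ v ∈ V, ∑ j, v j * w j = 0}
  zero_mem' := by intro v hv; simp
  add_mem' := by
    intro a b ha hb v hv
    simp [Pi.add_apply, mul_add, Finset.sum_add_distrib, ha v hv, hb v hv]
  smul_mem' := by
    intro c a ha v hv
    simp only [Pi.smul_apply, smul_eq_mul, mul_left_comm]
    rw [← Finset.mul_sum, ha v hv, mul_zero]

/-- Extension of scalars: the `L`-span of a `K`-subspace of `ι → K` inside `ι → L`. -/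
def extScalars {ι : Type} (W : Submodule K (ι → K)) : Submodule L (ι → L) :=
  Submodule.span L ((fun (w : ι → K) (j : ι) => algebraMap K L (w j)) '' (W : Set (ι → K)))

/-- Image of the code `C` under the canonical projection `π_V`. -/
def projImage {ι : Type} [Fintype ι] (C : Set (ι → L)) (V : Submodule K (ι → K)) :
    Set ((ι → L) ⧸ extScalars K L (stdPerp K V)) :=
  Submodule.Quotient.mk '' C

/-- The rank function induced by a code: `ρ_C(V) = log_{q^m} |π_V(C)|`. -/
noncomputable def rho {ι : Type} [Fintype ι] (C : Set (ι → L)) (V : Submodule K (ι → K)) : ℕ :=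
  Nat.log (Fintype.card L) (Nat.card (projImage K L C V))

/-- `C` is an almost affine rank-metric code. -/
def AlmostAffine {ι : Type} [Fintype ι] (C : Set (ι → L)) : Prop :=
  ∀ V : Submodule K (ι → K), ∃ e : ℕ, Nat.card (projImage K L C V) = (Fintype.card L) ^ e

/-- Support of a vector `v ∈ L^ι` w.r.t. a `K`-basis `B` of `L`. -/
def supp {ι : Type} {m : ℕ} (B : Basis (Fin m) K L) (v : ι → L) : Submodule K (ι → K) :=
  Submodule.span K (Set.range fun i : Fin m => fun j : ι => B.repr (v j) i)

/-- The subcode `C(Z,x) = {c ∈ C : π_Z(c) = π_Z(x)}`. -/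
def subcode {ι : Type} [Fintype ι] (C : Set (ι → L)) (Z : Submodule K (ι → K)) (x : ι → L) :
    Set (ι → L) :=
  {c ∈ C | (Submodule.Quotient.mk (p := extScalars K L (stdPerp K Z)) c) =
      Submodule.Quotient.mk x}

/-- The `q`-matroid rank axioms (R1)–(R3). -/
def IsQMatroidRank {E : Type} [AddCommGroup E] [Module K E] (r : Submodule K E → ℕ) : Prop :=
  (∀ V : Submodule K E, r V ≤ finrank K V) ∧
  (∀ V W : Submodule K E, V ≤ W → r V ≤ r W) ∧
  (∀ V W : Submodule K E, r (V ⊔ W) + r (V ⊓ W) ≤ r V + r W)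


section Helpers

variable {F M : Type} [Field F] [AddCommGroup M] [Module F M] [FiniteDimensional F M]
variable (r : Submodule F M → ℕ)

private lemma span_cons_eq (v : M) (l : List M) :
    span F {a : M | a ∈ v :: l} = span F {v} ⊔ span F {a : M | a ∈ l} := by
  rw [show {a : M | a ∈ v :: l} = insert v {a : M | a ∈ l} from by ext a; simp,
    Submodule.span_insert]

private lemma sup_span_cons (V : Submodule F M) (v : M) (l : List M) :
    V ⊔ span F {a : M | a ∈ v :: l} = (V ⊔ span F {v}) ⊔ span F {a : M | a ∈ l} := by
  rw [span_cons_eq, sup_assoc]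

private lemma span_nil_eq :
    span F {a : M | a ∈ ([] : List M)} = (⊥ : Submodule F M) := by
  rw [show {a : M | a ∈ ([] : List M)} = (∅ : Set M) from by ext a; simp, Submodule.span_empty]

private lemma finset_list (s : Finset M) : {a : M | a ∈ s.toList} = (↑s : Set M) := by
  ext a; simp

variable (hr2 : ∀ (V x : Submodule F M), finrank F x = 1 →
          r V ≤ r (V ⊔ x) ∧ r (V ⊔ x) ≤ r V + 1)

include hr2

private lemma step_bounds (V : Submodule F M) (v : M) :
    r V ≤ r (V ⊔ span F {v}) ∧ r (V ⊔ span F {v}) ≤ r V + 1 := by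
  by_cases hv : v = 0
  · subst hv; simp only [Submodule.span_zero_singleton, sup_bot_eq]; omega
  · exact hr2 V _ (finrank_span_singleton hv)

private lemma mono_list (l : List M) : ∀ V : Submodule F M,
    r V ≤ r (V ⊔ span F {a : M | a ∈ l}) := by
  induction l with
  | nil => intro V; simp [span_nil_eq]
  | cons v l ih =>
    intro V
    rw [sup_span_cons]
    exact le_trans (step_bounds r hr2 V v).1 (ih _)

private lemma rmono {V W : Submodule F M} (h : V ≤ W) : r V ≤ r W := by
  obtain ⟨s, hs⟩ := IsNoetherian.noetherian W
  have := mono_list r hr2 s.toList V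
  rwa [finset_list, hs, sup_eq_right.mpr h] at this

private lemma len_bound (l : List M) : ∀ V : Submodule F M,
    r (V ⊔ span F {a : M | a ∈ l}) ≤ r V + l.length := by
  induction l with
  | nil => intro V; simp [span_nil_eq]
  | cons v l ih =>
    intro V
    rw [sup_span_cons]
    calc r ((V ⊔ span F {v}) ⊔ span F {a : M | a ∈ l}) ≤ r (V ⊔ span F {v}) + l.length :=
          ih _
      _ ≤ r V + (v :: l).length := by
          have := (step_bounds r hr2 V v).2; simp only [List.length_cons]; omega

variable (hr3 : ∀ (V x y : Submodule F M), finrank F x = 1 → finrank F y = 1 →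
          r (V ⊔ x) = r V → r (V ⊔ y) = r V → r (V ⊔ x ⊔ y) = r V)

include hr3

/-- Lemma M: the property `r (· ⊔ x) = r ·` propagates up along span extensions. -/
private lemma propE (x : Submodule F M) (hx : finrank F x = 1) (l : List M) :
    ∀ A : Submodule F M, r (A ⊔ x) = r A →
      r ((A ⊔ span F {a : M | a ∈ l}) ⊔ x) = r (A ⊔ span F {a : M | a ∈ l}) := by
  induction l with
  | nil => intro A hA; rw [span_nil_eq, sup_bot_eq]; exact hA
  | cons v l ih =>
    intro A hA
    rw [sup_span_cons]
    refine ih (A ⊔ span F {v}) ?_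
    by_cases hv : v = 0
    · simpa [hv, Submodule.span_zero_singleton] using hA
    · have hv1 : finrank F (span F {v}) = 1 := finrank_span_singleton hv
      by_cases hc : r (A ⊔ span F {v}) = r A
      · have := hr3 A (span F {v}) x hv1 hx hc hA
        rw [this, hc]
      · have hb := hr2 A (span F {v}) hv1
        have hc' : r (A ⊔ span F {v}) = r A + 1 := by omega
        have h1 : r (A ⊔ span F {v}) ≤ r ((A ⊔ span F {v}) ⊔ x) := (hr2 _ x hx).1
        have heq : (A ⊔ span F {v}) ⊔ x = (A ⊔ x) ⊔ span F {v} := by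
          rw [sup_assoc, sup_assoc, sup_comm x]
        have h2 : r ((A ⊔ x) ⊔ span F {v}) ≤ r (A ⊔ x) + 1 := (hr2 _ _ hv1).2
        rw [heq] at h1
        rw [heq]
        omega

/-- Lemma F: local diminishing returns. -/
private lemma propF {A B : Submodule F M} (hAB : A ≤ B) (x : Submodule F M)
    (hx : finrank F x = 1) : r (B ⊔ x) + r A ≤ r (A ⊔ x) + r B := by
  by_cases h : r (A ⊔ x) = r A
  · obtain ⟨s, hs⟩ := IsNoetherian.noetherian B
    have hE := propE r hr2 hr3 x hx s.toList A h
    rw [finset_list, hs, sup_eq_right.mpr hAB] at hE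
    omega
  · have hb := hr2 A x hx
    have hb' := hr2 B x hx
    omega

/-- Lemma G: submodularity along a spanning list. -/
private lemma propG (l : List M) : ∀ U V : Submodule F M, U ≤ V →
    r (V ⊔ span F {a : M | a ∈ l}) + r U ≤ r V + r (U ⊔ span F {a : M | a ∈ l}) := by
  induction l with
  | nil => intro U V hUV; rw [span_nil_eq]; simp only [sup_bot_eq]; omega
  | cons v l ih =>
    intro U V hUV
    rw [sup_span_cons, sup_span_cons]
    by_cases hv : v = 0
    · simp only [hv, Submodule.span_zero_singleton, sup_bot_eq]
      exact ih U V hUV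
    · have hv1 : finrank F (span F {v}) = 1 := finrank_span_singleton hv
      have hF : r (V ⊔ span F {v}) + r U ≤ r (U ⊔ span F {v}) + r V :=
        propF r hr2 hr3 hUV _ hv1
      have hih := ih (U ⊔ span F {v}) (V ⊔ span F {v}) (sup_le_sup_right hUV _)
      omega


private lemma rank_le_finrank
    (hr1 : r (⊥ : Submodule F M) = 0) (V : Submodule F M) : r V ≤ finrank F V := by
  classical
  let b := Module.finBasis F V
  let l : List M := List.ofFn (fun i => ((b i : V) : M))
  have hset : {a : M | a ∈ l} = V.subtype '' Set.range b := by
    ext a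
    simp [l, List.mem_ofFn, Set.mem_image]
  have hsp : span F {a : M | a ∈ l} = V := by
    rw [hset, ← Submodule.map_span, b.span_eq, Submodule.map_top, Submodule.range_subtype]
  have := len_bound r hr2 l ⊥
  rw [bot_sup_eq, hsp, hr1] at this
  simpa [l] using this

end Helpers

theorem stmt_3' {F M : Type} [Field F] [AddCommGroup M] [Module F M] [FiniteDimensional F M]
    (r : Submodule F M → ℕ) :
    ((∀ V : Submodule F M, r V ≤ finrank F V) ∧
     (∀ V W : Submodule F M, V ≤ W → r V ≤ r W) ∧
     (∀ V W : Submodule F M, r (V ⊔ W) + r (V ⊓ W) ≤ r V + r W)) ↔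
      (r ⊥ = 0 ∧
       (∀ (V x : Submodule F M), finrank F x = 1 →
          r V ≤ r (V ⊔ x) ∧ r (V ⊔ x) ≤ r V + 1) ∧
       (∀ (V x y : Submodule F M), finrank F x = 1 → finrank F y = 1 →
          r (V ⊔ x) = r V → r (V ⊔ y) = r V → r (V ⊔ x ⊔ y) = r V)) := by
  constructor
  · rintro ⟨h1, h2, h3⟩
    refine ⟨?_, ?_, ?_⟩
    · have := h1 ⊥
      rw [finrank_bot] at this
      omega
    · intro V x hx
      refine ⟨h2 V (V ⊔ x) le_sup_left, ?_⟩
      have hs := h3 V x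
      have hx' : r x ≤ 1 := by
        have := h1 x
        omega
      omega
    · intro V x y hx hy hVx hVy
      have key : (V ⊔ x) ⊔ (V ⊔ y) = V ⊔ x ⊔ y := by
        rw [sup_sup_sup_comm, sup_idem, ← sup_assoc]
      have hm : r V ≤ r ((V ⊔ x) ⊓ (V ⊔ y)) :=
        h2 _ _ (le_inf le_sup_left le_sup_left)
      have h3' := h3 (V ⊔ x) (V ⊔ y)
      rw [key] at h3'
      have hup : r V ≤ r (V ⊔ x ⊔ y) :=
        h2 _ _ (le_trans (le_sup_left : V ≤ V ⊔ x) le_sup_left)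
      omega
  · rintro ⟨h1, h2, h3⟩
    refine ⟨fun V => rank_le_finrank r h2 h3 h1 V, fun V W h => rmono r h2 h, ?_⟩
    intro V W
    obtain ⟨s, hs⟩ := IsNoetherian.noetherian W
    have := propG r h2 h3 s.toList (V ⊓ W) V inf_le_left
    rwa [finset_list, hs, sup_eq_right.mpr (inf_le_right : V ⊓ W ≤ W)] at this


/-- the rank axioms (R1)-(R3) are equivalent to the local axioms (R1')-(R3'). -/
theorem stmt_3 {K E : Type} [Field K] [AddCommGroup E] [Module K E] [FiniteDimensional K E]
    (r : Submodule K E → ℕ) :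
    IsQMatroidRank K r ↔
      (r ⊥ = 0 ∧
       (∀ (V x : Submodule K E), finrank K x = 1 →
          r V ≤ r (V ⊔ x) ∧ r (V ⊔ x) ≤ r V + 1) ∧
       (∀ (V x y : Submodule K E), finrank K x = 1 → finrank K y = 1 →
          r (V ⊔ x) = r V → r (V ⊔ y) = r V → r (V ⊔ x ⊔ y) = r V)) := by
  exact stmt_3' r
end

section
/- If M = (E, ρ) is a q-matroid, then the function ρ*(V) = dim V − ρ(E) + ρ(V^⊥) also satisfies the q-matroid rank axioms, so M* = (E, ρ*) is a q-matroid; moreover (M*)* = M. -/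
open Submodule Module

variable (K L : Type) [Field K] [Fintype K] [Field L] [Fintype L] [Algebra K L]

/-!
For `U ≤ V`, submodularity applied to `U` and a complement `C` of `U` inside `V` gives
`ρ(V) ≤ ρ(U) + dim C = ρ(U) + dim V - dim U`. With `U = V^⊥` this yields
`ρ(E) ≤ ρ(V^⊥) + dim V`, so `ρ*` is an honest integer expression. Orthogonal complementation
with respect to a nondegenerate reflexive form is an inclusion-reversing involution that swaps
`⊔` and `⊓` and satisfies `dim V^⊥ = dim E - dim V`; under it each axiom for `ρ*` becomes the
corresponding axiom (or the rank lemma above) for `ρ`, and `(ρ*)* = ρ` reduces to arithmetic.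
-/

open LinearMap (BilinForm)

namespace LinearMap.BilinForm

variable {K E : Type*} [Field K] [AddCommGroup E] [Module K E]

theorem orthogonal_sup (B : BilinForm K E) (V W : Submodule K E) :
    B.orthogonal (V ⊔ W) = B.orthogonal V ⊓ B.orthogonal W := by
  refine le_antisymm (le_inf (orthogonal_le le_sup_left) (orthogonal_le le_sup_right)) ?_
  intro x ⟨hV, hW⟩ u hu
  obtain ⟨v, hv, w, hw, rfl⟩ := Submodule.mem_sup.mp hu
  rw [map_add, LinearMap.add_apply, hV v hv, hW w hw, add_zero]

variable [FiniteDimensional K E] {B : BilinForm K E}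

theorem orthogonal_inf (hB : B.Nondegenerate) (hB₀ : B.IsRefl) (V W : Submodule K E) :
    B.orthogonal (V ⊓ W) = B.orthogonal V ⊔ B.orthogonal W := by
  conv_lhs => rw [← orthogonal_orthogonal hB hB₀ V, ← orthogonal_orthogonal hB hB₀ W,
    ← orthogonal_sup, orthogonal_orthogonal hB hB₀]

theorem finrank_add_finrank_orthogonal_of_nondegenerate (hB : B.Nondegenerate)
    (V : Submodule K E) : finrank K V + finrank K (B.orthogonal V) = finrank K E := by
  have := V.finrank_le
  rw [finrank_orthogonal hB]
  omega

end LinearMap.BilinForm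

theorem isRefl_dotProductBilin {K ι : Type*} [Field K] [Fintype ι] :
    (dotProductBilin K K : BilinForm K (ι → K)).IsRefl := by
  intro x y h
  simpa [dotProduct_comm] using h

theorem nondegenerate_dotProductBilin {K ι : Type*} [Field K] [Fintype ι] :
    (dotProductBilin K K : BilinForm K (ι → K)).Nondegenerate := by
  classical
  refine isRefl_dotProductBilin.nondegenerate_iff_separatingLeft.mpr fun v hv => ?_
  funext i
  simpa using hv (Pi.single i 1)

theorem stdPerp_eq_orthogonal {K ι : Type} [Field K] [Fintype ι] (V : Submodule K (ι → K)) :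
    stdPerp K V = BilinForm.orthogonal (dotProductBilin K K) V := rfl

namespace IsQMatroidRank

variable {K E : Type} [Field K] [AddCommGroup E] [Module K E] {r : Submodule K E → ℕ}

theorem rank_bot (hr : IsQMatroidRank K r) : r ⊥ = 0 := by
  simpa using hr.1 ⊥

variable [FiniteDimensional K E]

theorem rank_add_finrank_le_of_le (hr : IsQMatroidRank K r) {U V : Submodule K E} (h : U ≤ V) :
    r V + finrank K U ≤ r U + finrank K V := by
  obtain ⟨C', hC'⟩ := U.exists_isCompl
  have hsup : U ⊔ C' ⊓ V = V := by
    rw [← sup_inf_assoc_of_le C' h, hC'.sup_eq_top, top_inf_eq]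
  have hinf : U ⊓ (C' ⊓ V) = ⊥ :=
    eq_bot_iff.mpr ((inf_le_inf_left U inf_le_left).trans hC'.inf_eq_bot.le)
  have hdim := Submodule.finrank_sup_add_finrank_inf_eq U (C' ⊓ V)
  have hsub := hr.2.2 U (C' ⊓ V)
  have hC := hr.1 (C' ⊓ V)
  rw [hsup, hinf, finrank_bot] at hdim
  rw [hsup, hinf] at hsub
  omega

end IsQMatroidRank

section DualRank

open LinearMap.BilinForm

variable {K E : Type} [Field K] [AddCommGroup E] [Module K E] [FiniteDimensional K E]
  {B : BilinForm K E} {r : Submodule K E → ℕ}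

noncomputable def dualRank (B : BilinForm K E) (r : Submodule K E → ℕ) (V : Submodule K E) : ℕ :=
  finrank K V + r (B.orthogonal V) - r ⊤

theorem IsQMatroidRank.rank_top_le (hr : IsQMatroidRank K r) (hB : B.Nondegenerate)
    (V : Submodule K E) : r ⊤ ≤ r (B.orthogonal V) + finrank K V := by
  have := hr.rank_add_finrank_le_of_le (le_top : B.orthogonal V ≤ ⊤)
  have := finrank_add_finrank_orthogonal_of_nondegenerate hB V
  rw [finrank_top] at *
  omega

-- the truncated subtraction in `dualRank` never truncates
theorem IsQMatroidRank.dualRank_add_rank_top (hr : IsQMatroidRank K r) (hB : B.Nondegenerate)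
    (V : Submodule K E) : dualRank B r V + r ⊤ = finrank K V + r (B.orthogonal V) := by
  have := hr.rank_top_le hB V
  unfold dualRank
  omega

theorem IsQMatroidRank.dual (hr : IsQMatroidRank K r) (hB : B.Nondegenerate)
    (hB₀ : B.IsRefl) : IsQMatroidRank K (dualRank B r) := by
  have key := hr.dualRank_add_rank_top hB
  refine ⟨fun V => ?_, fun V W hVW => ?_, fun V W => ?_⟩
  · have := hr.2.1 (B.orthogonal V) ⊤ le_top
    have := key V
    omega
  · have hrank := hr.rank_add_finrank_le_of_le (orthogonal_le hVW : B.orthogonal W ≤ _)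
    have hV := finrank_add_finrank_orthogonal_of_nondegenerate hB V
    have hW := finrank_add_finrank_orthogonal_of_nondegenerate hB W
    have := key V
    have := key W
    omega
  · have hsub := hr.2.2 (B.orthogonal V) (B.orthogonal W)
    have hdim := Submodule.finrank_sup_add_finrank_inf_eq V W
    have hsup := key (V ⊔ W)
    have hinf := key (V ⊓ W)
    rw [orthogonal_sup] at hsup
    rw [orthogonal_inf hB hB₀] at hinf
    have := key V
    have := key W
    omega

theorem IsQMatroidRank.dualRank_dualRank (hr : IsQMatroidRank K r) (hB : B.Nondegenerate)
    (hB₀ : B.IsRefl) : dualRank B (dualRank B r) = r := by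
  funext V
  have hr' := hr.dual hB hB₀
  have := hr'.dualRank_add_rank_top hB V
  have := hr.dualRank_add_rank_top hB (B.orthogonal V)
  have := hr.dualRank_add_rank_top hB ⊤
  have := hr.rank_top_le hB (B.orthogonal V)
  have := finrank_add_finrank_orthogonal_of_nondegenerate hB V
  rw [orthogonal_orthogonal hB hB₀, orthogonal_top_eq_bot hB, hr.rank_bot, finrank_top] at *
  omega

end DualRank

theorem stmt_4_general {K : Type} [Field K] {n : ℕ}
    (r : Submodule K (Fin n → K) → ℕ) (hr : IsQMatroidRank K r) :
    IsQMatroidRank K (fun V : Submodule K (Fin n → K) =>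
        finrank K V + r (stdPerp K V) - r ⊤) ∧
    (∀ V : Submodule K (Fin n → K),
      finrank K V +
          (fun W : Submodule K (Fin n → K) => finrank K W + r (stdPerp K W) - r ⊤)
            (stdPerp K V) -
          (fun W : Submodule K (Fin n → K) => finrank K W + r (stdPerp K W) - r ⊤) ⊤
        = r V) := by
  simp only [stdPerp_eq_orthogonal]
  exact ⟨hr.dual nondegenerate_dotProductBilin isRefl_dotProductBilin,
    congrFun (hr.dualRank_dualRank nondegenerate_dotProductBilin isRefl_dotProductBilin)⟩

/-- the dual rank function `ρ*(V) = dim V − ρ(E) + ρ(V^⊥)` satisfies the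
q-matroid axioms, and the double dual equals the original rank function. -/
theorem stmt_4 {K : Type} [Field K] {n : ℕ} [Fintype K]
    (r : Submodule K (Fin n → K) → ℕ) (hr : IsQMatroidRank K r) :
    IsQMatroidRank K (fun V : Submodule K (Fin n → K) =>
        finrank K V + r (stdPerp K V) - r ⊤) ∧
    (∀ V : Submodule K (Fin n → K),
      finrank K V +
          (fun W : Submodule K (Fin n → K) => finrank K W + r (stdPerp K W) - r ⊤)
            (stdPerp K V) -
          (fun W : Submodule K (Fin n → K) => finrank K W + r (stdPerp K W) - r ⊤) ⊤
        = r V) :=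
  stmt_4_general r hr
end

section
/- If M = (E, ρ) is a q-matroid and Z ≤ E a subspace, then the restriction ρ|_Z of ρ to subspaces of Z satisfies the q-matroid rank axioms on Z, and the contraction rank function ρ_{E/Z}(V) := ρ(σ^{-1}(V)) − ρ(Z) (where σ : E → E/Z is the canonical projection) satisfies the q-matroid rank axioms on E/Z. -/
open Submodule Module

variable (K L : Type) [Field K] [Fintype K] [Field L] [Fintype L] [Algebra K L]

section Aux
variable {K E : Type} [Field K] [AddCommGroup E] [Module K E] [FiniteDimensional K E]

lemma aux_step (r : Submodule K E → ℕ)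
    (hr : (∀ V : Submodule K E, r V ≤ finrank K V) ∧
      (∀ V W : Submodule K E, V ≤ W → r V ≤ r W) ∧
      (∀ V W : Submodule K E, r (V ⊔ W) + r (V ⊓ W) ≤ r V + r W))
    {A B : Submodule K E} (h : A ≤ B) :
    r B + finrank K A ≤ r A + finrank K B := by
  obtain ⟨h1, h2, h3⟩ := hr
  set A' : Submodule K B := A.comap B.subtype with hA'
  obtain ⟨W', hW'⟩ := A'.exists_isCompl
  set W : Submodule K E := W'.map B.subtype with hW
  have hmapA : A'.map B.subtype = A := by
    rw [hA', Submodule.map_comap_subtype, inf_eq_right.2 h]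
  have hsup : A ⊔ W = B := by
    rw [← hmapA, hW, ← Submodule.map_sup, hW'.sup_eq_top, Submodule.map_top,
      Submodule.range_subtype]
  have hfin : finrank K A' + finrank K W' = finrank K B :=
    Submodule.finrank_add_eq_of_isCompl hW'
  have hA'A : finrank K A' = finrank K A := by
    rw [← hmapA]; exact (Submodule.finrank_map_subtype_eq B A').symm
  have hWW' : finrank K W = finrank K W' := Submodule.finrank_map_subtype_eq B W'
  have h4 : r B ≤ r A + r W := by
    have := h3 A W
    rw [hsup] at this
    omega
  have h5 : r W ≤ finrank K W := h1 W
  omega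
end Aux

section Aux2
variable {K E : Type} [Field K] [AddCommGroup E] [Module K E] [FiniteDimensional K E]

lemma Z_le_comap (Z : Submodule K E) (V : Submodule K (E ⧸ Z)) : Z ≤ V.comap Z.mkQ := by
  intro x hx
  simp only [Submodule.mem_comap, Submodule.mkQ_apply]
  rw [(Submodule.Quotient.mk_eq_zero _).2 hx]
  exact V.zero_mem

lemma finrank_comap_mkQ (Z : Submodule K E) (V : Submodule K (E ⧸ Z)) :
    finrank K (V.comap Z.mkQ) = finrank K V + finrank K Z := by
  have h := LinearMap.finrank_range_add_finrank_ker (Z.mkQ.domRestrict (V.comap Z.mkQ))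
  rw [LinearMap.range_domRestrict, LinearMap.ker_domRestrict,
    Submodule.map_comap_eq_of_surjective Z.mkQ_surjective, Submodule.ker_mkQ] at h
  have : finrank K (Z.comap (V.comap Z.mkQ).subtype) = finrank K Z :=
    (Submodule.comapSubtypeEquivOfLe (Z_le_comap Z V)).finrank_eq
  omega
end Aux2

theorem stmt_5' {K E : Type} [Field K] [AddCommGroup E] [Module K E] [FiniteDimensional K E]
    (r : Submodule K E → ℕ) (hr : (∀ V : Submodule K E, r V ≤ finrank K V) ∧
      (∀ V W : Submodule K E, V ≤ W → r V ≤ r W) ∧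
      (∀ V W : Submodule K E, r (V ⊔ W) + r (V ⊓ W) ≤ r V + r W)) (Z : Submodule K E) :
    ((∀ V : Submodule K Z, r (V.map Z.subtype) ≤ finrank K V) ∧
      (∀ V W : Submodule K Z, V ≤ W → r (V.map Z.subtype) ≤ r (W.map Z.subtype)) ∧
      (∀ V W : Submodule K Z, r ((V ⊔ W).map Z.subtype) + r ((V ⊓ W).map Z.subtype) ≤
        r (V.map Z.subtype) + r (W.map Z.subtype))) ∧
    ((∀ V : Submodule K (E ⧸ Z), r (V.comap Z.mkQ) - r Z ≤ finrank K V) ∧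
      (∀ V W : Submodule K (E ⧸ Z), V ≤ W → r (V.comap Z.mkQ) - r Z ≤ r (W.comap Z.mkQ) - r Z) ∧
      (∀ V W : Submodule K (E ⧸ Z),
        (r ((V ⊔ W).comap Z.mkQ) - r Z) + (r ((V ⊓ W).comap Z.mkQ) - r Z) ≤
        (r (V.comap Z.mkQ) - r Z) + (r (W.comap Z.mkQ) - r Z))) := by
  obtain ⟨h1, h2, h3⟩ := hr
  constructor
  · refine ⟨fun V => ?_, fun V W h => h2 _ _ (Submodule.map_mono h), fun V W => ?_⟩
    · calc r (V.map Z.subtype) ≤ finrank K (V.map Z.subtype) := h1 _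
        _ = finrank K V := Submodule.finrank_map_subtype_eq Z V
    · rw [Submodule.map_sup, Submodule.map_inf _ Z.injective_subtype]
      exact h3 _ _
  · have hZle : ∀ V : Submodule K (E ⧸ Z), r Z ≤ r (V.comap Z.mkQ) :=
      fun V => h2 _ _ (Z_le_comap Z V)
    refine ⟨fun V => ?_, fun V W h => ?_, fun V W => ?_⟩
    · have := aux_step r ⟨h1, h2, h3⟩ (Z_le_comap Z V)
      have hfr := finrank_comap_mkQ Z V
      omega
    · have := h2 _ _ (Submodule.comap_mono (f := Z.mkQ) h)
      omega
    · have hsup : (V ⊔ W).comap Z.mkQ = V.comap Z.mkQ ⊔ W.comap Z.mkQ := by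
        conv_lhs => rw [← Submodule.map_sup_comap_of_surjective Z.mkQ_surjective V W,
          Submodule.comap_map_eq]
        rw [Submodule.ker_mkQ, sup_assoc, sup_eq_left.2 (Z_le_comap Z W)]
      have hinf : (V ⊓ W).comap Z.mkQ = V.comap Z.mkQ ⊓ W.comap Z.mkQ :=
        rfl
      have h3' := h3 (V.comap Z.mkQ) (W.comap Z.mkQ)
      rw [← hsup, ← hinf] at h3'
      have := hZle (V ⊔ W)
      have := hZle (V ⊓ W)
      have := hZle V
      have := hZle W
      omega

/-- restriction and contraction of a q-matroid are q-matroids. -/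
theorem stmt_5 {K E : Type} [Field K] [AddCommGroup E] [Module K E] [FiniteDimensional K E]
    (r : Submodule K E → ℕ) (hr : IsQMatroidRank K r) (Z : Submodule K E) :
    IsQMatroidRank K (fun V : Submodule K Z => r (V.map Z.subtype)) ∧
    IsQMatroidRank K (fun V : Submodule K (E ⧸ Z) => r (V.comap Z.mkQ) - r Z) := by
  exact stmt_5' r hr Z
end

section
/- Let C ⊆ F_{q^m}^n be an almost affine rank-metric code. Then the function ρ_C(V) = log_{q^m} |π_V(C)| on subspaces V ≤ F_q^n satisfies the q-matroid rank axioms, i.e., (F_q^n, ρ_C) is a q-matroid. -/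
open Submodule Module

variable (K L : Type) [Field K] [Fintype K] [Field L] [Fintype L] [Algebra K L]

/-!
For `T ≤ V` the projection `π_V(C) → π_T(C)` is induced by the surjective linear map
`F_{q^m}^n / E_V → F_{q^m}^n / E_T`, where `E_V = V^⊥ ⊗ F_{q^m}`, whose kernel has dimension `dim V - dim T`;
its fibre over `π_T(c)` is `π_V(C(T,c))`. When `dim V = dim T + 1` every fibre has between
`1` and `q^m` elements, and since `|π_V(C)|` and `|π_T(C)|` are powers of `q^m` this forces all
fibres to have the same size. Going up a flag from `T` to `V` one dimension at a time, the fibres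
of `π_V(C) → π_T(C)` are therefore uniform for every `T ≤ V`.

Submodularity follows: `E_{V+W} = E_V ∩ E_W`, so `π_{V+W}(D)` embeds into `π_V(D) × π_W(D)`
for every `D`. Applied to `D = C(V ∩ W, c)` and combined with the uniformity of the fibres over
`π_{V ∩ W}(C)` this gives `|π_{V+W}(C)| |π_{V∩W}(C)| ≤ |π_V(C)| |π_W(C)|`.
-/

open Finset in
theorem Finset.card_mul_eq_of_sum_eq_pow {β : Type*} {B : Finset β} {n : β → ℕ} {q e a : ℕ}
    (hq : 1 < q) (hpos : ∀ b ∈ B, 1 ≤ n b) (hle : ∀ b ∈ B, n b ≤ q) (hB : #B = q ^ e)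
    (hsum : ∑ b ∈ B, n b = q ^ a) : ∀ b ∈ B, #B * n b = q ^ a := by
  have hea : e ≤ a := by
    rw [← Nat.pow_le_pow_iff_right hq, ← hB, ← hsum, card_eq_sum_ones]
    exact sum_le_sum hpos
  have hae : a ≤ e + 1 := by
    rw [← Nat.pow_le_pow_iff_right hq, ← hsum, pow_succ, ← hB, ← smul_eq_mul, ← sum_const]
    exact sum_le_sum hle
  obtain rfl | rfl : a = e ∨ a = e + 1 := by omega
  · have hone : ∀ b ∈ B, 1 = n b := by
      rw [← sum_eq_sum_iff_of_le hpos, ← card_eq_sum_ones, hsum, hB]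
    intro b hb
    rw [← hone b hb, mul_one, hB]
  · have hfull : ∀ b ∈ B, n b = q := by
      rw [← sum_eq_sum_iff_of_le hle, sum_const, smul_eq_mul, hsum, hB, pow_succ]
    intro b hb
    rw [hfull b hb, hB, pow_succ]

section Fibers
variable {α β : Type*} {A : Set α}

theorem Set.ncard_eq_sum_ncard_fibers (hA : A.Finite) (f : α → β) :
    A.ncard = ∑ b ∈ (hA.image f).toFinset, {a ∈ A | f a = b}.ncard := by
  classical
  rw [Set.ncard_eq_toFinset_card A hA, Finset.card_eq_sum_card_image f hA.toFinset,
    Set.Finite.toFinset_image f hA (hA.image f)]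
  refine Finset.sum_congr rfl fun b _ => ?_
  rw [← Set.ncard_coe_finset]
  congr 1
  ext a
  simp

theorem Set.ncard_eq_ncard_image_mul (hA : A.Finite) {f : α → β} {k : ℕ}
    (hk : ∀ a ∈ A, {x ∈ A | f x = f a}.ncard = k) : A.ncard = (f '' A).ncard * k := by
  rw [Set.ncard_eq_sum_ncard_fibers hA f, Set.ncard_eq_toFinset_card _ (hA.image f),
    ← smul_eq_mul, ← Finset.sum_const]
  refine Finset.sum_congr rfl fun b hb => ?_
  obtain ⟨a, ha, rfl⟩ := (Set.Finite.mem_toFinset _).mp hb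
  exact hk a ha

theorem Set.ncard_image_mul_ncard_fiber_of_eq_pow (hA : A.Finite) {f : α → β} {q e a : ℕ}
    (hq : 1 < q) (hle : ∀ x ∈ A, {y ∈ A | f y = f x}.ncard ≤ q) (hA_card : A.ncard = q ^ a)
    (himage : (f '' A).ncard = q ^ e) :
    ∀ x ∈ A, (f '' A).ncard * {y ∈ A | f y = f x}.ncard = A.ncard := by
  rw [Set.ncard_eq_toFinset_card _ (hA.image f)] at himage ⊢
  have hfibers := Finset.card_mul_eq_of_sum_eq_pow hq (n := fun b => {y ∈ A | f y = b}.ncard)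
    (B := (hA.image f).toFinset) ?_ ?_ himage 
    (by rw [← Set.ncard_eq_sum_ncard_fibers hA, hA_card])
  · intro x hx
    rw [hA_card]
    exact hfibers (f x) (by simpa using ⟨x, hx, rfl⟩)
  all_goals
    intro b hb
    obtain ⟨x, hx, rfl⟩ := (Set.Finite.mem_toFinset _).mp hb
  · exact (Set.ncard_pos (hA.subset fun _ h => h.1)).mpr ⟨x, hx, rfl⟩
  · exact hle x hx

end Fibers

section ScalarExtension
variable {K L ι : Type} [Field K] [Field L] [Algebra K L]

lemma extScalars_span (s : Set (ι → K)) :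
    extScalars K L (span K s) =
      span L ((fun (w : ι → K) (j : ι) => algebraMap K L (w j)) '' s) := by
  change span L (LinearMap.compLeft (Algebra.linearMap K L) ι '' _) = _
  rw [← map_coe, map_span, span_span_of_tower]
  rfl

lemma extScalars_mono {A B : Submodule K (ι → K)} (h : A ≤ B) :
    extScalars K L A ≤ extScalars K L B :=
  span_mono (Set.image_mono h)

lemma extScalars_sup (A B : Submodule K (ι → K)) :
    extScalars K L (A ⊔ B) = extScalars K L A ⊔ extScalars K L B := by
  rw [← A.span_eq, ← B.span_eq, ← span_union, extScalars_span, extScalars_span, extScalars_span,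
    Set.image_union, span_union]

variable [Finite ι]

lemma finrank_extScalars (W : Submodule K (ι → K)) :
    finrank L (extScalars K L W) = finrank K W := by
  set b := finBasis K W
  have hspan : span K (Set.range (W.subtype ∘ b)) = W := by
    rw [Set.range_comp, ← Submodule.map_span, b.span_eq, Submodule.map_subtype_top]
  have hli : LinearIndependent K (W.subtype ∘ b) :=
    b.linearIndependent.map' W.subtype (ker_subtype W)
  conv_lhs => rw [← hspan, extScalars_span, ← Set.range_comp]
  exact (finrank_span_eq_card (linearIndependent_algebraMap_comp_iff.mpr hli)).trans
    (Fintype.card_fin _)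

lemma extScalars_inf (A B : Submodule K (ι → K)) :
    extScalars K L (A ⊓ B) = extScalars K L A ⊓ extScalars K L B := by
  refine eq_of_le_of_finrank_le
    (le_inf (extScalars_mono inf_le_left) (extScalars_mono inf_le_right)) ?_
  have hL := Submodule.finrank_sup_add_finrank_inf_eq (extScalars K L A) (extScalars K L B)
  have hK := Submodule.finrank_sup_add_finrank_inf_eq A B
  rw [← extScalars_sup, finrank_extScalars, finrank_extScalars, finrank_extScalars] at hL
  rw [finrank_extScalars]
  omega

end ScalarExtension

section Orthogonal
variable {K ι : Type} [Field K] [Fintype ι]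

lemma stdPerp_eq_comap_dualAnnihilator [DecidableEq ι] (V : Submodule K (ι → K)) :
    stdPerp K V =
      V.dualAnnihilator.comap (dotProductEquiv K ι : (ι → K) →ₗ[K] Dual K (ι → K)) := by
  ext w
  simp only [mem_comap, mem_dualAnnihilator]
  exact forall₂_congr fun v _ => by simp [dotProduct, mul_comm]

lemma stdPerp_anti {V W : Submodule K (ι → K)} (h : V ≤ W) : stdPerp K W ≤ stdPerp K V :=
  fun _ hw v hv => hw v (h hv)

lemma stdPerp_sup (V W : Submodule K (ι → K)) :
    stdPerp K (V ⊔ W) = stdPerp K V ⊓ stdPerp K W := by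
  classical
  simp only [stdPerp_eq_comap_dualAnnihilator, dualAnnihilator_sup_eq, comap_inf]

lemma finrank_add_finrank_stdPerp (V : Submodule K (ι → K)) :
    finrank K V + finrank K (stdPerp K V) = Fintype.card ι := by
  classical
  rw [stdPerp_eq_comap_dualAnnihilator, comap_equiv_eq_map_symm, LinearEquiv.finrank_map_eq,
    Subspace.finrank_add_finrank_dualAnnihilator_eq, finrank_fintype_fun_eq_card]

end Orthogonal

instance Submodule.finite_quotient {R M : Type*} [Ring R] [AddCommGroup M] [Module R M] [Finite M]
    (p : Submodule R M) : Finite (M ⧸ p) :=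
  Finite.of_surjective _ p.mkQ_surjective

lemma LinearMap.ncard_fiber_le_natCard_ker {R M N : Type*} [Ring R] [AddCommGroup M] [Module R M]
    [AddCommGroup N] [Module R N] [Finite M] (f : M →ₗ[R] N) (A : Set M) (x : M) :
    {y ∈ A | f y = f x}.ncard ≤ Nat.card (ker f) := by
  rw [← Nat.card_coe_set_eq]
  refine Nat.card_le_card_of_injective (fun y => ⟨y.1 - x, by simp [y.2.2]⟩) fun y z hyz => ?_
  exact Subtype.ext (sub_left_inj.mp (congrArg Subtype.val hyz))

section Projection
variable {K L ι : Type} [Field K] [Field L] [Algebra K L] [Fintype ι]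

lemma extScalars_stdPerp_anti {T V : Submodule K (ι → K)} (h : T ≤ V) :
    extScalars K L (stdPerp K V) ≤ extScalars K L (stdPerp K T) :=
  extScalars_mono (stdPerp_anti h)

lemma extScalars_stdPerp_sup (V W : Submodule K (ι → K)) :
    extScalars K L (stdPerp K (V ⊔ W)) =
      extScalars K L (stdPerp K V) ⊓ extScalars K L (stdPerp K W) := by
  rw [stdPerp_sup, extScalars_inf]

lemma finrank_quotient_extScalars_stdPerp (V : Submodule K (ι → K)) :
    finrank L ((ι → L) ⧸ extScalars K L (stdPerp K V)) = finrank K V := by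
  have hquot := (extScalars K L (stdPerp K V)).finrank_quotient_add_finrank
  have hperp := finrank_add_finrank_stdPerp V
  rw [finrank_extScalars, finrank_fintype_fun_eq_card] at hquot
  omega

lemma finrank_ker_factor_extScalars_stdPerp {T V : Submodule K (ι → K)} (h : T ≤ V) :
    finrank L (LinearMap.ker (factor (extScalars_stdPerp_anti (L := L) h))) + finrank K T =
      finrank K V := by
  have := (factor (extScalars_stdPerp_anti (L := L) h)).finrank_range_add_finrank_ker
  rw [LinearMap.range_eq_top.mpr (factor_surjective _), finrank_top,
    finrank_quotient_extScalars_stdPerp, finrank_quotient_extScalars_stdPerp] at this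
  omega

variable (C : Set (ι → L))

lemma factor_image_projImage {T V : Submodule K (ι → K)} (h : T ≤ V) :
    factor (extScalars_stdPerp_anti h) '' projImage K L C V = projImage K L C T := by
  rw [projImage, projImage, Set.image_image]
  rfl

lemma projImage_subcode {T V : Submodule K (ι → K)} (h : T ≤ V) (c : ι → L) :
    projImage K L (subcode K L C T c) V =
      {x ∈ projImage K L C V |
        factor (extScalars_stdPerp_anti h) x = Submodule.Quotient.mk c} := by
  ext x
  constructor
  · rintro ⟨d, ⟨hd, hdc⟩, rfl⟩
    exact ⟨⟨d, hd, rfl⟩, hdc⟩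
  · rintro ⟨⟨d, hd, rfl⟩, hdc⟩
    exact ⟨d, ⟨hd, hdc⟩, rfl⟩

lemma projImage_subcode_self {T : Submodule K (ι → K)} {c : ι → L} (hc : c ∈ C) :
    projImage K L (subcode K L C T c) T = {Submodule.Quotient.mk c} := by
  ext x
  constructor
  · rintro ⟨d, ⟨-, hdc⟩, rfl⟩
    exact hdc
  · rintro rfl
    exact ⟨c, ⟨hc, rfl⟩, rfl⟩

lemma subcode_subcode {T U : Submodule K (ι → K)} (h : T ≤ U) {c c' : ι → L}
    (hc' : c' ∈ subcode K L C T c) :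
    subcode K L (subcode K L C T c) U c' = subcode K L C U c' := by
  ext d
  refine ⟨fun ⟨⟨hd, _⟩, hdc'⟩ => ⟨hd, hdc'⟩, fun ⟨hd, hdc'⟩ => ⟨⟨hd, ?_⟩, hdc'⟩⟩
  exact (congrArg (factor (extScalars_stdPerp_anti h)) hdc').trans hc'.2

variable [Fintype L]

lemma ncard_projImage_le (V : Submodule K (ι → K)) :
    (projImage K L C V).ncard ≤ Fintype.card L ^ finrank K V := by
  calc (projImage K L C V).ncard ≤ Nat.card ((ι → L) ⧸ extScalars K L (stdPerp K V)) :=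
        Set.ncard_le_card _
    _ = Fintype.card L ^ finrank K V := by
        rw [Module.natCard_eq_pow_finrank (K := L), Nat.card_eq_fintype_card,
          finrank_quotient_extScalars_stdPerp]

lemma rho_le_finrank (V : Submodule K (ι → K)) : rho K L C V ≤ finrank K V := by
  rw [rho, Nat.card_coe_set_eq, ← Nat.log_pow (Fintype.one_lt_card (α := L)) (finrank K V)]
  exact Nat.log_mono_right (ncard_projImage_le C V)

lemma rho_mono {V W : Submodule K (ι → K)} (h : V ≤ W) :
    rho K L C V ≤ rho K L C W := by
  rw [rho, rho, Nat.card_coe_set_eq, Nat.card_coe_set_eq, ← factor_image_projImage C h]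
  exact Nat.log_mono_right (Set.ncard_image_le (Set.toFinite _))

lemma ncard_projImage_sup_le (V W : Submodule K (ι → K)) :
    (projImage K L C (V ⊔ W)).ncard ≤ (projImage K L C V).ncard * (projImage K L C W).ncard := by
  rw [← Set.ncard_prod]
  refine Set.ncard_le_ncard_of_injOn (fun x => (factor (extScalars_stdPerp_anti le_sup_left) x,
    factor (extScalars_stdPerp_anti le_sup_right) x)) ?_ ?_
  · rintro _ ⟨d, hd, rfl⟩
    exact ⟨⟨d, hd, rfl⟩, ⟨d, hd, rfl⟩⟩
  · rintro _ ⟨d, -, rfl⟩ _ ⟨d', -, rfl⟩ hdd'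
    simp only [mapQ_apply, LinearMap.id_apply, Prod.mk.injEq, Submodule.Quotient.eq] at hdd'
    rw [Submodule.Quotient.eq, extScalars_stdPerp_sup]
    exact hdd'

end Projection

section UniformFibers
variable {K L ι : Type} [Field K] [Field L] [Algebra K L] [Fintype ι] (C : Set (ι → L))

def UniformFibers (T V : Submodule K (ι → K)) : Prop :=
  ∀ c ∈ C, (projImage K L C T).ncard * (projImage K L (subcode K L C T c) V).ncard =
    (projImage K L C V).ncard

lemma uniformFibers_refl (T : Submodule K (ι → K)) : UniformFibers C T T := fun c hc => by
  rw [projImage_subcode_self C hc, Set.ncard_singleton, mul_one]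

variable {C}

lemma UniformFibers.trans [Fintype L] {T U V : Submodule K (ι → K)} (hTU : T ≤ U) (hUV : U ≤ V)
    (h₁ : UniformFibers C T U) (h₂ : UniformFibers C U V) : UniformFibers C T V := by
  intro c hc
  have hU_pos : 0 < (projImage K L C U).ncard := (Set.ncard_pos).mpr ⟨_, c, hc, rfl⟩
  have hfibers : (projImage K L (subcode K L C T c) V).ncard =
      (projImage K L (subcode K L C T c) U).ncard *
        (projImage K L (subcode K L C U c) V).ncard := by
    rw [← factor_image_projImage _ hUV]
    refine Set.ncard_eq_ncard_image_mul (Set.toFinite _) ?_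
    rintro _ ⟨d, hd, rfl⟩
    rw [mapQ_apply, LinearMap.id_apply, ← projImage_subcode _ hUV, subcode_subcode C hTU hd]
    exact Nat.eq_of_mul_eq_mul_left hU_pos ((h₂ d hd.1).trans (h₂ c hc).symm)
  refine Nat.eq_of_mul_eq_mul_left hU_pos ?_
  calc (projImage K L C U).ncard * ((projImage K L C T).ncard *
        (projImage K L (subcode K L C T c) V).ncard)
      = ((projImage K L C T).ncard * (projImage K L (subcode K L C T c) U).ncard) *
          ((projImage K L C U).ncard * (projImage K L (subcode K L C U c) V).ncard) := by
        rw [hfibers]; ring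
    _ = (projImage K L C U).ncard * (projImage K L C V).ncard := by rw [h₁ c hc, h₂ c hc]

lemma uniformFibers_of_finrank_le_succ [Fintype L] (hC : AlmostAffine K L C)
    {T U : Submodule K (ι → K)} (h : T ≤ U) (hdim : finrank K U ≤ finrank K T + 1) :
    UniformFibers C T U := by
  intro c hc
  have hdim_ker := finrank_ker_factor_extScalars_stdPerp (L := L) h
  set f := factor (extScalars_stdPerp_anti (L := L) h)
  have hker : Nat.card (LinearMap.ker f) ≤ Fintype.card L := by
    rw [Module.natCard_eq_pow_finrank (K := L), Nat.card_eq_fintype_card]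
    exact (Nat.pow_le_pow_right Fintype.card_pos (by omega)).trans_eq (pow_one _)
  obtain ⟨eU, hU⟩ := hC U
  obtain ⟨eT, hT⟩ := hC T
  rw [Nat.card_coe_set_eq] at hU hT
  rw [← factor_image_projImage C h] at hT ⊢
  rw [projImage_subcode C h c]
  exact Set.ncard_image_mul_ncard_fiber_of_eq_pow (Set.toFinite _) Fintype.one_lt_card
    (fun x _ => (f.ncard_fiber_le_natCard_ker _ x).trans hker) hU hT _ ⟨c, hc, rfl⟩

lemma uniformFibers_of_le [Fintype L] (hC : AlmostAffine K L C) {T V : Submodule K (ι → K)}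
    (h : T ≤ V) : UniformFibers C T V := by
  obtain ⟨k, hk⟩ : ∃ k, finrank K V ≤ finrank K T + k := ⟨finrank K V, by omega⟩
  induction k generalizing T with
  | zero =>
    obtain rfl := eq_of_le_of_finrank_le h (by omega)
    exact uniformFibers_refl C T
  | succ k ih =>
    obtain rfl | hlt := h.eq_or_lt
    · exact uniformFibers_refl C T
    obtain ⟨x, hxV, hxT⟩ := SetLike.exists_of_lt hlt
    have hTU : T < T ⊔ span K {x} := left_lt_sup.mpr (by rwa [span_singleton_le_iff_mem])
    have hdim : finrank K ↥(T ⊔ span K {x}) ≤ finrank K T + 1 :=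
      (finrank_add_le_finrank_add_finrank T _).trans
        (by simpa using finrank_span_le_card (R := K) ({x} : Set (ι → K)))
    have hUV : T ⊔ span K {x} ≤ V := sup_le h ((span_singleton_le_iff_mem _ _).mpr hxV)
    have hTU_rank := finrank_lt_finrank_of_lt hTU
    exact (uniformFibers_of_finrank_le_succ hC hTU.le hdim).trans hTU.le hUV
      (ih hUV (by omega))

end UniformFibers

section Rank
variable {K L ι : Type} [Field K] [Field L] [Fintype L] [Algebra K L] [Fintype ι]
  {C : Set (ι → L)}

lemma ncard_projImage_sup_mul_ncard_projImage_inf_le (hC : AlmostAffine K L C)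
    (V W : Submodule K (ι → K)) :
    (projImage K L C (V ⊔ W)).ncard * (projImage K L C (V ⊓ W)).ncard ≤
      (projImage K L C V).ncard * (projImage K L C W).ncard := by
  obtain ⟨c, hc⟩ : C.Nonempty := by
    obtain ⟨e, he⟩ := hC ⊥
    by_contra hC_empty
    simp only [Set.not_nonempty_iff_eq_empty.mp hC_empty, projImage, Set.image_empty,
      Nat.card_of_isEmpty] at he
    exact (pow_pos Fintype.card_pos e).ne he
  set D := subcode K L C (V ⊓ W) c
  have hsup := uniformFibers_of_le hC (inf_le_left.trans le_sup_left : V ⊓ W ≤ V ⊔ W) c hc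
  have hV := uniformFibers_of_le hC (inf_le_left : V ⊓ W ≤ V) c hc
  have hW := uniformFibers_of_le hC (inf_le_right : V ⊓ W ≤ W) c hc
  have hT_pos : 0 < (projImage K L C (V ⊓ W)).ncard := (Set.ncard_pos).mpr ⟨_, c, hc, rfl⟩
  refine Nat.le_of_mul_le_mul_left ?_ hT_pos
  rw [← hsup, ← hV, ← hW]
  calc _ = (projImage K L C (V ⊓ W)).ncard ^ 3 * (projImage K L D (V ⊔ W)).ncard := by ring
    _ ≤ (projImage K L C (V ⊓ W)).ncard ^ 3 *
        ((projImage K L D V).ncard * (projImage K L D W).ncard) := by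
      gcongr
      exact ncard_projImage_sup_le D V W
    _ = _ := by ring

lemma pow_rho (hC : AlmostAffine K L C) (V : Submodule K (ι → K)) :
    Fintype.card L ^ rho K L C V = (projImage K L C V).ncard := by
  obtain ⟨e, he⟩ := hC V
  rw [rho, he, Nat.log_pow Fintype.one_lt_card, ← he, Nat.card_coe_set_eq]

lemma rho_sup_add_rho_inf_le (hC : AlmostAffine K L C) (V W : Submodule K (ι → K)) :
    rho K L C (V ⊔ W) + rho K L C (V ⊓ W) ≤ rho K L C V + rho K L C W := by
  rw [← Nat.pow_le_pow_iff_right (Fintype.one_lt_card (α := L)), pow_add, pow_add,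
    pow_rho hC, pow_rho hC, pow_rho hC, pow_rho hC]
  exact ncard_projImage_sup_mul_ncard_projImage_inf_le hC V W

end Rank

theorem stmt_6_general {K L : Type} [Field K] [Field L] [Fintype L] [Algebra K L]
    {n : ℕ} (C : Set (Fin n → L)) (hC : AlmostAffine K L C) :
    IsQMatroidRank K (rho K L C (ι := Fin n)) :=
  ⟨rho_le_finrank C, fun _ _ => rho_mono C, rho_sup_add_rho_inf_le hC⟩

/-- an almost affine rank-metric code induces a q-matroid. -/
theorem stmt_6 {K L : Type} [Field K] [Fintype K] [Field L] [Fintype L] [Algebra K L]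
    {n : ℕ} (C : Set (Fin n → L)) (hC : AlmostAffine K L C) :
    IsQMatroidRank K (rho K L C (ι := Fin n)) :=
  stmt_6_general C hC
end

section
/- Equivalent almost affine rank-metric codes induce equivalent q-matroids: if C_2 = A·C_1 + t for some A ∈ GL_n(F_q) and t ∈ F_{q^m}^n, then the F_q-linear isomorphism φ(V) = (A^{-1})^T V satisfies ρ_{C_2}(φ(V)) = ρ_{C_1}(V) for all V ≤ F_q^n. -/
open Submodule Module

variable (K L : Type) [Field K] [Fintype K] [Field L] [Fintype L] [Algebra K L]

open scoped Matrix in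
lemma dot_shift {K : Type} [CommRing K] {n : ℕ} (M : Matrix (Fin n) (Fin n) K) (v w : Fin n → K) :
    ∑ j, (M.transpose.mulVec v) j * w j = ∑ j, v j * (M.mulVec w) j := by
  have h : dotProduct (M.transpose.mulVec v) w = dotProduct v (M.mulVec w) := by
    rw [Matrix.mulVec_transpose, Matrix.dotProduct_mulVec]
  simpa [dotProduct] using h

lemma perp_map {K : Type} [Field K] {n : ℕ} (A : Matrix (Fin n) (Fin n) K)
    (hA : IsUnit A.det) (V : Submodule K (Fin n → K)) :
    stdPerp K (V.map (Matrix.toLin' (A⁻¹).transpose)) = (stdPerp K V).map (Matrix.toLin' A) := by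
  ext w
  constructor
  · intro hw
    refine ⟨A⁻¹.mulVec w, ?_, ?_⟩
    · intro v hv
      have h1 : ((A⁻¹).transpose.mulVec v) ∈ V.map (Matrix.toLin' (A⁻¹).transpose) :=
        ⟨v, hv, by rw [Matrix.toLin'_apply]⟩
      have := hw _ h1
      rw [← dot_shift]
      exact this
    · rw [Matrix.toLin'_apply, Matrix.mulVec_mulVec, Matrix.mul_nonsing_inv A hA,
        Matrix.one_mulVec]
  · rintro ⟨u, hu, rfl⟩ x ⟨v, hv, rfl⟩
    rw [Matrix.toLin'_apply, Matrix.toLin'_apply, dot_shift, Matrix.mulVec_mulVec,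
      Matrix.nonsing_inv_mul A hA, Matrix.one_mulVec]
    exact hu v hv

lemma ext_map {K L : Type} [Field K] [Field L] [Algebra K L] {n : ℕ}
    (M : Matrix (Fin n) (Fin n) K) (W : Submodule K (Fin n → K)) :
    extScalars K L (W.map (Matrix.toLin' M)) =
      (extScalars K L W).map (Matrix.toLin' (M.map (algebraMap K L))) := by
  unfold extScalars
  rw [Submodule.map_span]
  congr 1
  rw [Submodule.map_coe, ← Set.image_comp, ← Set.image_comp]
  apply congrFun
  apply congrArg
  funext w
  funext j
  simp only [Function.comp_apply, Matrix.toLin'_apply]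
  exact RingHom.map_mulVec (algebraMap K L) M w j

/-- equivalent almost affine codes induce equivalent q-matroids, via
`φ(V) = (A⁻¹)ᵀ V`. -/
theorem stmt_9 {K L : Type} [Field K] [Fintype K] [Field L] [Fintype L] [Algebra K L]
    {n : ℕ} (C₁ C₂ : Set (Fin n → L)) (h1 : AlmostAffine K L C₁) (h2 : AlmostAffine K L C₂)
    (A : Matrix (Fin n) (Fin n) K) (hA : IsUnit A.det) (t : Fin n → L)
    (hC : C₂ = (fun c => (A.map (algebraMap K L)).mulVec c + t) '' C₁) :
    ∀ V : Submodule K (Fin n → K),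
      rho K L C₂ (V.map (Matrix.toLin' (A⁻¹).transpose)) = rho K L C₁ V := by
  intro V
  set B := A.map (algebraMap K L) with hB
  have hAL : IsUnit B.det := by
    have hd : B.det = algebraMap K L A.det := by
      rw [hB, RingHom.map_det, RingHom.mapMatrix_apply]
    rw [hd]
    exact hA.map (algebraMap K L)
  set φV := V.map (Matrix.toLin' (A⁻¹).transpose) with hφV
  have hW : extScalars K L (stdPerp K φV) =
      (extScalars K L (stdPerp K V)).map (Matrix.toLin' B) := by
    rw [hφV, perp_map A hA V, ext_map]
  let gE : (Fin n → L) ≃ₗ[L] (Fin n → L) :=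
    LinearEquiv.ofLinear (Matrix.toLin' B) (Matrix.toLin' B⁻¹)
      (by rw [← Matrix.toLin'_mul, Matrix.mul_nonsing_inv B hAL, Matrix.toLin'_one])
      (by rw [← Matrix.toLin'_mul, Matrix.nonsing_inv_mul B hAL, Matrix.toLin'_one])
  have hmap : (extScalars K L (stdPerp K V)).map
      (gE : (Fin n → L) →ₗ[L] (Fin n → L)) = extScalars K L (stdPerp K φV) := by
    rw [hW]; rfl
  let qE := Submodule.Quotient.equiv (extScalars K L (stdPerp K V))
    (extScalars K L (stdPerp K φV)) gE hmap
  have himg : projImage K L C₂ φV =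
      (fun x => qE x + Submodule.Quotient.mk t) '' (projImage K L C₁ V) := by
    unfold projImage
    rw [hC, Set.image_image, Set.image_image]
    apply Set.image_congr'
    intro c
    show Submodule.Quotient.mk (B.mulVec c + t) =
      qE (Submodule.Quotient.mk c) + Submodule.Quotient.mk t
    have hq : qE (Submodule.Quotient.mk c) = Submodule.Quotient.mk (B.mulVec c) := by
      simp [qE, gE, Submodule.Quotient.equiv, Submodule.mapQ_apply, Matrix.toLin'_apply]
    rw [hq, ← Submodule.Quotient.mk_add]
  have hinj : Function.Injective (fun x => qE x + Submodule.Quotient.mk t) := by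
    intro a b hab
    have := add_right_cancel hab
    exact qE.injective this
  unfold rho
  rw [himg, Nat.card_image_of_injective hinj]
end

section
/- Semifield code construction: let S be a finite semifield of order q^m containing F_q in its center, identified additively with F_{q^m}, with F_q-bilinear multiplication ∘ and no zero divisors. Define C_S = {(x, (y − x∘a)_{a∈S}) : (x,y) ∈ S²} ⊆ F_{q^m}^{q^m+1}. Then C_S is an F_q-linear code of cardinality q^{2m}, and for every subspace V ≤ F_q^{q^m+1}, the cardinality of π_V(C_S) is 1, q^m, or q^{2m}; hence C_S is almost affine. -/
open Submodule Module

variable (K L : Type) [Field K] [Fintype K] [Field L] [Fintype L] [Algebra K L]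

/-! The code is the image of the injective `F_q`-linear map `(x, y) ↦ (x, (y - x ∘ a)_a)`, so
`|π_V(C_S)| · |K_V| = q^{2m}`, where `K_V` is the set of pairs sent into `V^⊥ ⊗ F_{q^m}`.
Pairing the codeword of `(x, y)` with `v ∈ V` gives `A_v y + x ∘ B_v`, where
`A_v = Σ_a v_a ∈ F_q` and `B_v = v_∞ · 1 - Σ_a v_a a`. If every `A_v` vanishes, `K_V` is
everything or `{0} × S`. Otherwise one equation reads `y = -x ∘ s` for a fixed `s`, the others
become `x ∘ (B_v - A_v s) = 0`, and since `S` has no zero divisors `K_V` is a graph over `S`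
or `0`. -/

theorem mem_extScalars_stdPerp_iff {K L ι : Type} [Field K] [Fintype K] [Field L] [Fintype L]
    [Algebra K L] [Fintype ι] (V : Submodule K (ι → K)) (c : ι → L) :
    c ∈ extScalars K L (stdPerp K V) ↔ ∀ v ∈ V, ∑ j, v j • c j = 0 := by
  constructor
  · intro hc v hv
    let dot : (ι → L) →ₗ[L] L := ∑ j, algebraMap K L (v j) • LinearMap.proj j
    suffices extScalars K L (stdPerp K V) ≤ LinearMap.ker dot by
      simpa [dot, Algebra.smul_def] using this hc
    refine Submodule.span_le.2 ?_
    rintro _ ⟨w, hw, rfl⟩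
    have hvw : ∑ j, v j * w j = 0 := hw v hv
    simp only [SetLike.mem_coe, LinearMap.mem_ker, LinearMap.coe_sum, LinearMap.coe_smul,
      LinearMap.coe_proj, Finset.sum_apply, Pi.smul_apply, Function.eval, dot, smul_eq_mul,
      ← map_mul, ← map_sum, hvw, map_zero]
  · intro h
    let B := Module.finBasis K L
    have coord_mem : ∀ i, (fun j => B.repr (c j) i) ∈ stdPerp K V := by
      intro i v hv
      simpa [map_sum] using congrArg (fun z => B.repr z i) (h v hv)
    have hc : c = ∑ i, B i • fun j => algebraMap K L (B.repr (c j) i) := by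
      funext j
      conv_lhs => rw [← B.sum_repr (c j)]
      simp [Algebra.smul_def, mul_comm]
    rw [hc]
    exact Submodule.sum_mem _ fun i _ =>
      Submodule.smul_mem _ _ (Submodule.subset_span ⟨_, coord_mem i, rfl⟩)

section Annihilator

variable {K L : Type} [Field K] [AddCommGroup L] [Module K L] (mul : L →ₗ[K] L →ₗ[K] L)

def semifieldAnnihilator (P : Set (K × L)) : Set (L × L) :=
  {p | ∀ q ∈ P, q.1 • p.2 + mul p.1 q.2 = 0}

variable {mul} {P : Set (K × L)}

@[simp]
theorem mem_semifieldAnnihilator {p : L × L} :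
    p ∈ semifieldAnnihilator mul P ↔ ∀ q ∈ P, q.1 • p.2 + mul p.1 q.2 = 0 :=
  Iff.rfl

theorem semifieldAnnihilator_eq_univ (hP : ∀ q ∈ P, q = 0) :
    semifieldAnnihilator mul P = Set.univ :=
  Set.eq_univ_of_forall fun p q hq => by simp [hP q hq]

theorem semifieldAnnihilator_eq_range_zero_prod
    (hzd : ∀ a b : L, mul a b = 0 → a = 0 ∨ b = 0) (hP : ∀ q ∈ P, q.1 = 0)
    {q₀ : K × L} (hq₀ : q₀ ∈ P) (hq₀' : q₀.2 ≠ 0) :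
    semifieldAnnihilator mul P = Set.range (Prod.mk 0) := by
  ext ⟨x, y⟩
  simp only [mem_semifieldAnnihilator, Set.mem_range, Prod.mk.injEq, exists_eq_right]
  constructor
  · intro h
    have := h q₀ hq₀
    rw [hP q₀ hq₀, zero_smul, zero_add] at this
    exact ((hzd _ _ this).resolve_right hq₀').symm
  · rintro rfl q hq
    simp [hP q hq]

theorem mem_semifieldAnnihilator_iff_of_fst_ne_zero {q₀ : K × L} (hq₀ : q₀ ∈ P)
    (hq₀' : q₀.1 ≠ 0) {x y : L} :
    (x, y) ∈ semifieldAnnihilator mul P ↔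
      y = -mul x (q₀.1⁻¹ • q₀.2) ∧ ∀ q ∈ P, mul x (q.2 - q.1 • q₀.1⁻¹ • q₀.2) = 0 := by
  have key : ∀ q : K × L, q.1 • -mul x (q₀.1⁻¹ • q₀.2) + mul x q.2 =
      mul x (q.2 - q.1 • q₀.1⁻¹ • q₀.2) := by
    intro q
    simp only [map_sub, map_smul, smul_neg]
    abel
  constructor
  · intro h
    have hy : y = -mul x (q₀.1⁻¹ • q₀.2) :=
      calc y = q₀.1⁻¹ • q₀.1 • y := (inv_smul_smul₀ hq₀' y).symm
        _ = _ := by rw [eq_neg_of_add_eq_zero_left (h q₀ hq₀), map_smul, smul_neg]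
    subst hy
    exact ⟨rfl, fun q hq => (key q).symm.trans (h q hq)⟩
  · rintro ⟨rfl, h⟩ q hq
    exact (key q).trans (h q hq)

theorem semifieldAnnihilator_eq_range_graph {q₀ : K × L} (hq₀ : q₀ ∈ P) (hq₀' : q₀.1 ≠ 0)
    (hP : ∀ q ∈ P, q.2 = q.1 • q₀.1⁻¹ • q₀.2) :
    semifieldAnnihilator mul P = Set.range fun x => (x, -mul x (q₀.1⁻¹ • q₀.2)) := by
  ext ⟨x, y⟩
  simp only [mem_semifieldAnnihilator_iff_of_fst_ne_zero hq₀ hq₀', Set.mem_range,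
    Prod.mk.injEq, exists_eq_left, eq_comm (b := y)]
  exact and_iff_left fun q hq => by rw [← hP q hq, sub_self, map_zero]

theorem semifieldAnnihilator_eq_singleton_zero (hzd : ∀ a b : L, mul a b = 0 → a = 0 ∨ b = 0)
    {q₀ : K × L} (hq₀ : q₀ ∈ P) (hq₀' : q₀.1 ≠ 0) {q : K × L} (hq : q ∈ P)
    (hq' : q.2 ≠ q.1 • q₀.1⁻¹ • q₀.2) :
    semifieldAnnihilator mul P = {0} := by
  ext ⟨x, y⟩
  simp only [mem_semifieldAnnihilator_iff_of_fst_ne_zero hq₀ hq₀', Set.mem_singleton_iff,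
    Prod.mk_eq_zero]
  constructor
  · rintro ⟨rfl, h⟩
    obtain rfl : x = 0 := (hzd _ _ (h q hq)).resolve_right (sub_ne_zero.2 hq')
    simp
  · rintro ⟨rfl, rfl⟩
    simp

theorem card_semifieldAnnihilator [Finite L] (hzd : ∀ a b : L, mul a b = 0 → a = 0 ∨ b = 0)
    (P : Set (K × L)) :
    Nat.card (semifieldAnnihilator mul P) = Nat.card L ^ 2 ∨
      Nat.card (semifieldAnnihilator mul P) = Nat.card L ∨
      Nat.card (semifieldAnnihilator mul P) = 1 := by
  by_cases hP₁ : ∀ q ∈ P, q.1 = 0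
  · by_cases hP : ∀ q ∈ P, q = 0
    · left
      rw [semifieldAnnihilator_eq_univ hP, Nat.card_univ, Nat.card_prod, sq]
    · right; left
      push Not at hP
      obtain ⟨q₀, hq₀, hq₀'⟩ := hP
      have hq₀₂ : q₀.2 ≠ 0 := fun h => hq₀' (Prod.ext (hP₁ q₀ hq₀) h)
      rw [semifieldAnnihilator_eq_range_zero_prod hzd hP₁ hq₀ hq₀₂,
        Nat.card_range_of_injective (Prod.mk_right_injective 0)]
  · push Not at hP₁
    obtain ⟨q₀, hq₀, hq₀'⟩ := hP₁
    by_cases hP : ∀ q ∈ P, q.2 = q.1 • q₀.1⁻¹ • q₀.2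
    · right; left
      rw [semifieldAnnihilator_eq_range_graph hq₀ hq₀' hP, Nat.card_range_of_injective]
      exact fun x x' h => congrArg Prod.fst h
    · right; right
      push Not at hP
      obtain ⟨q, hq, hq'⟩ := hP
      rw [semifieldAnnihilator_eq_singleton_zero hzd hq₀ hq₀' hq hq', Nat.card_unique]

end Annihilator

section Code

variable {K L : Type} [Field K] [AddCommGroup L] [Module K L] (mul : L →ₗ[K] L →ₗ[K] L)

def semifieldCode : L × L →ₗ[K] Option L → L where
  toFun p i := i.elim p.1 fun a => p.2 - mul p.1 a
  map_add' p p' := by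
    funext i
    cases i with
    | none => rfl
    | some a =>
      simp only [Option.elim_some, Prod.fst_add, Prod.snd_add, map_add, LinearMap.add_apply,
        Pi.add_apply]
      abel
  map_smul' r p := by
    funext i
    cases i <;> simp [smul_sub]

@[simp]
theorem semifieldCode_apply_none (p : L × L) : semifieldCode mul p none = p.1 :=
  rfl

@[simp]
theorem semifieldCode_apply_some (p : L × L) (a : L) :
    semifieldCode mul p (some a) = p.2 - mul p.1 a :=
  rfl

theorem semifieldCode_injective : Function.Injective (semifieldCode mul) := by
  intro p p' h
  have h₂ := congrFun h (some 0)
  simp only [semifieldCode_apply_some, map_zero, sub_zero] at h₂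
  exact Prod.ext (congrFun h none) h₂

variable [Fintype L]

/-- The pair `(A_v, B_v)`. -/
def semifieldCodeDual (one : L) (v : Option L → K) : K × L :=
  (∑ a, v (some a), v none • one - ∑ a, v (some a) • a)

theorem sum_smul_semifieldCode {one : L} (hone : ∀ a, mul a one = a) (v : Option L → K)
    (p : L × L) :
    ∑ j, v j • semifieldCode mul p j =
      (semifieldCodeDual one v).1 • p.2 + mul p.1 (semifieldCodeDual one v).2 := by
  simp only [semifieldCodeDual, Fintype.sum_option, semifieldCode_apply_none,
    semifieldCode_apply_some, smul_sub, Finset.sum_sub_distrib, Finset.sum_smul, map_sub,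
    map_smul, hone, map_sum]
  abel

end Code

section Projection

variable {K L : Type} [Field K] [Fintype K] [Field L] [Fintype L] [Algebra K L]
  (mul : L →ₗ[K] L →ₗ[K] L)

theorem card_projImage_mul_card_semifieldAnnihilator {one : L}
    (hone : ∀ a, mul a one = a) (V : Submodule K (Option L → K)) :
    Nat.card (projImage K L (Set.range (semifieldCode mul)) V) *
      Nat.card (semifieldAnnihilator mul (semifieldCodeDual one '' V)) = Nat.card L ^ 2 := by
  let ψ := ((extScalars K L (stdPerp K V)).mkQ.restrictScalars K).comp (semifieldCode mul)
  have himage : projImage K L (Set.range (semifieldCode mul)) V = Set.range ψ :=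
    (Set.range_comp _ _).symm
  have hker : semifieldAnnihilator mul (semifieldCodeDual one '' V) = {p | ψ p = 0} := by
    ext p
    simp [ψ, Submodule.Quotient.mk_eq_zero, mem_extScalars_stdPerp_iff,
      sum_smul_semifieldCode mul hone]
  rw [himage, hker, sq, ← Nat.card_prod L L, ← ψ.toAddMonoidHom.ker.card_mul_index,
    AddSubgroup.index_ker, mul_comm]
  rfl

theorem card_projImage_semifieldCode (hzd : ∀ a b : L, mul a b = 0 → a = 0 ∨ b = 0) {one : L}
    (hone : ∀ a, mul a one = a) (V : Submodule K (Option L → K)) :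
    Nat.card (projImage K L (Set.range (semifieldCode mul)) V) = 1 ∨
      Nat.card (projImage K L (Set.range (semifieldCode mul)) V) = Nat.card L ∨
      Nat.card (projImage K L (Set.range (semifieldCode mul)) V) = Nat.card L ^ 2 := by
  have hcount := card_projImage_mul_card_semifieldAnnihilator mul hone V
  have hL : 0 < Nat.card L := Nat.card_pos
  rcases card_semifieldAnnihilator hzd (semifieldCodeDual one '' V) with h | h | h <;>
    rw [h] at hcount
  · exact .inl (Nat.eq_of_mul_eq_mul_right (pow_pos hL 2) (by rwa [one_mul]))
  · exact .inr (.inl (Nat.eq_of_mul_eq_mul_right hL (by rwa [sq] at hcount)))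
  · exact .inr (.inr (by rwa [mul_one] at hcount))

end Projection

/-- semifield code construction. `L` (of order `q^m`) carries a `K`-bilinear
semifield multiplication `mul` with identity and no zero divisors. The code
`C_S = {(x, (y − x∘a)_{a∈S}) : (x,y) ∈ S²} ⊆ F_{q^m}^{q^m+1}` (coordinates indexed by
`{∞} ∪ S`, i.e. `Option L`) is `F_q`-linear of cardinality `q^{2m}`, every projection
`π_V(C_S)` has cardinality `1`, `q^m` or `q^{2m}`, and hence `C_S` is almost affine. -/
theorem stmt_19 {K L : Type} [Field K] [Fintype K] [Field L] [Fintype L] [Algebra K L]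
    (mul : L →ₗ[K] L →ₗ[K] L)
    (hzd : ∀ a b : L, mul a b = 0 → a = 0 ∨ b = 0)
    (one : L) (hone : ∀ a : L, mul one a = a ∧ mul a one = a)
    (CS : Set (Option L → L))
    (hCS : CS = {f | ∃ x y : L,
        f = fun i => match i with
          | none => x
          | some a => y - mul x a}) :
    (∀ c₁ ∈ CS, ∀ c₂ ∈ CS, c₁ + c₂ ∈ CS) ∧
    (∀ r : K, ∀ c ∈ CS, r • c ∈ CS) ∧
    Nat.card CS = Fintype.card L ^ 2 ∧
    (∀ V : Submodule K (Option L → K),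
      Nat.card (projImage K L CS V) = 1 ∨
      Nat.card (projImage K L CS V) = Fintype.card L ∨
      Nat.card (projImage K L CS V) = Fintype.card L ^ 2) ∧
    AlmostAffine K L CS := by
  obtain rfl : CS = Set.range (semifieldCode mul) := by
    rw [hCS]
    ext f
    constructor
    · rintro ⟨x, y, rfl⟩
      exact ⟨(x, y), funext fun i => by cases i <;> rfl⟩
    · rintro ⟨⟨x, y⟩, rfl⟩
      exact ⟨x, y, funext fun i => by cases i <;> rfl⟩
  have hproj := card_projImage_semifieldCode mul hzd (fun a => (hone a).2)
  rw [Nat.card_eq_fintype_card (α := L)] at hproj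
  refine ⟨?_, ?_, ?_, hproj, fun V => ?_⟩
  · rintro _ ⟨p, rfl⟩ _ ⟨p', rfl⟩
    exact ⟨p + p', map_add _ p p'⟩
  · rintro r _ ⟨p, rfl⟩
    exact ⟨r • p, map_smul _ r p⟩
  · rw [Nat.card_range_of_injective (semifieldCode_injective mul), Nat.card_prod,
      Nat.card_eq_fintype_card, sq]
  · rcases hproj V with h | h | h
    exacts [⟨0, by rw [h, pow_zero]⟩, ⟨1, by rw [h, pow_one]⟩, ⟨2, h⟩]
end
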